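/- For λ ∈ ℝ³ and Q_n(λ) := |e_0⟩⟨e_0| + Σ_{i=1}^3 λ_i |e_i⟩⟨e_i|, the associated map has the explicit form E_{Q_n(λ)}(ρ) = (1/2)(tr(ρ) I + Σ_{i=1}^3 λ_i tr(ρ σ_i) σ_i) for every 2×2 complex matrix ρ. -/
import Mathlib


open Matrix Finset

/-- The four vectors `e_μ ∈ ℝ³` pointing to the corners of the Bloch tetrahedron. -/
noncomputable def e : Fin 4 → Fin 3 → ℝ :=
  ![![1, 1, 1], ![1, -1, -1], ![-1, 1, -1], ![-1, -1, 1]]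

/-- The Pauli matrices `σ₁, σ₂, σ₃`. -/
noncomputable def σ : Fin 3 → Matrix (Fin 2) (Fin 2) ℂ :=
  ![!![0, 1; 1, 0], !![0, -Complex.I; Complex.I, 0], !![1, 0; 0, -1]]

/-- The matrices `A_μ = (1/2)(I + e_μ·σ)`. -/
noncomputable def A (μ : Fin 4) : Matrix (Fin 2) (Fin 2) ℂ :=
  (1 / 2 : ℂ) • ((1 : Matrix (Fin 2) (Fin 2) ℂ) + ∑ i, (e μ i : ℂ) • σ i)

/-- The map `E_Q(ρ) = (1/2) Σ_{μν} Q_{μν} tr(ρ A_ν) A_μ` associated to a 4×4 real matrix. -/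
noncomputable def chan (Q : Matrix (Fin 4) (Fin 4) ℝ) (ρ : Matrix (Fin 2) (Fin 2) ℂ) :
    Matrix (Fin 2) (Fin 2) ℂ :=
  (1 / 2 : ℂ) • ∑ μ, ∑ ν, (Q μ ν : ℂ) • ((ρ * A ν).trace • A μ)

/-- The four-dimensional vectors `|e_μ⟩ = (1/2)(1, e_μ)ᵀ`. -/
noncomputable def ketE (μ : Fin 4) : Fin 4 → ℝ :=
  (1 / 2 : ℝ) • (Fin.cons (1 : ℝ) (e μ) : Fin 4 → ℝ)

/-- The normal form `Q_n(λ) = |e_0⟩⟨e_0| + Σᵢ λᵢ |e_i⟩⟨e_i|`. -/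
noncomputable def Qn (l : Fin 3 → ℝ) : Matrix (Fin 4) (Fin 4) ℝ :=
  vecMulVec (ketE 0) (ketE 0) + ∑ i : Fin 3, l i • vecMulVec (ketE i.succ) (ketE i.succ)

lemma c1 (x:ℝ) (v : Fin 3 → ℝ) : (Fin.cons x v : Fin 4 → ℝ) 1 = v 0 := rfl
lemma c2 (x:ℝ) (v : Fin 3 → ℝ) : (Fin.cons x v : Fin 4 → ℝ) 2 = v 1 := rfl
lemma c3 (x:ℝ) (v : Fin 3 → ℝ) : (Fin.cons x v : Fin 4 → ℝ) 3 = v 2 := rfl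
lemma c1m (x:ℝ) (v : Fin 3 → ℝ) (h) : (Fin.cons x v : Fin 4 → ℝ) ⟨1,h⟩ = v 0 := rfl
lemma c2m (x:ℝ) (v : Fin 3 → ℝ) (h) : (Fin.cons x v : Fin 4 → ℝ) ⟨2,h⟩ = v 1 := rfl
lemma c3m (x:ℝ) (v : Fin 3 → ℝ) (h) : (Fin.cons x v : Fin 4 → ℝ) ⟨3,h⟩ = v 2 := rfl

set_option maxHeartbeats 1000000 in
lemma Aexp : A = ![!![1, (1-Complex.I)/2; (1+Complex.I)/2, 0],
    !![0, (1+Complex.I)/2; (1-Complex.I)/2, 1],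
    !![0, (-1-Complex.I)/2; (-1+Complex.I)/2, 1],
    !![1, (-1+Complex.I)/2; (-1-Complex.I)/2, 0]] := by
  funext μ
  fin_cases μ <;>
  · ext i j
    fin_cases i <;> fin_cases j <;>
      simp [A, e, σ, Fin.sum_univ_three, Matrix.one_apply] <;> ring

lemma ketEexp : ketE = ![![1/2,1/2,1/2,1/2], ![1/2,1/2,-1/2,-1/2],
    ![1/2,-1/2,1/2,-1/2], ![1/2,-1/2,-1/2,1/2]] := by
  funext μ ν
  fin_cases μ <;> fin_cases ν <;>
    norm_num [ketE, e, Fin.cons_zero, c1, c2, c3, c1m, c2m, c3m]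

set_option maxHeartbeats 1000000 in
lemma key0 : ∑ μ, (ketE 0 μ : ℂ) • A μ = 1 := by
  ext i j
  fin_cases i <;> fin_cases j <;>
    · simp [Fin.sum_univ_four, ketEexp, Aexp, Matrix.one_apply]
      try ring

set_option maxHeartbeats 1000000 in
lemma keyi (i : Fin 3) : ∑ μ, (ketE i.succ μ : ℂ) • A μ = σ i := by
  fin_cases i <;>
  · ext a b
    fin_cases a <;> fin_cases b <;>
      · simp [Fin.sum_univ_four, ketEexp, Aexp, σ,
          show ((0:Fin 3).succ) = (1:Fin 4) from rfl,
          show ((1:Fin 3).succ) = (2:Fin 4) from rfl,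
          show ((2:Fin 3).succ) = (3:Fin 4) from rfl]
        try ring

lemma rank1 (u : Fin 4 → ℝ) (ρ : Matrix (Fin 2) (Fin 2) ℂ) :
    ∑ μ, ∑ ν, ((u μ * u ν : ℝ) : ℂ) • ((ρ * A ν).trace • A μ)
      = (ρ * (∑ ν, (u ν : ℂ) • A ν)).trace • ∑ μ, (u μ : ℂ) • A μ := by
  simp only [Matrix.mul_sum, Matrix.mul_smul, Matrix.trace_sum, Matrix.trace_smul,
    Finset.sum_smul, Finset.smul_sum, smul_smul, Complex.ofReal_mul,
    smul_eq_mul, Finset.sum_mul]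
  refine Finset.sum_congr rfl fun μ _ => Finset.sum_congr rfl fun ν _ => ?_
  congr 1
  ring

/-- The explicit form of the channel associated to the normal form:
`E_{Q_n(λ)}(ρ) = (1/2)(tr(ρ) I + Σᵢ λᵢ tr(ρ σᵢ) σᵢ)`. -/
theorem chan_Qn_explicit (l : Fin 3 → ℝ) (ρ : Matrix (Fin 2) (Fin 2) ℂ) :
    chan (Qn l) ρ =
      (1 / 2 : ℂ) • (ρ.trace • (1 : Matrix (Fin 2) (Fin 2) ℂ)
        + ∑ i, (l i : ℂ) • ((ρ * σ i).trace • σ i)) := by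
  have expand : chan (Qn l) ρ = (1/2 : ℂ) •
      ((∑ μ, ∑ ν, ((ketE 0 μ * ketE 0 ν : ℝ) : ℂ) • ((ρ * A ν).trace • A μ))
        + ∑ i, (l i : ℂ) •
          ∑ μ, ∑ ν, ((ketE i.succ μ * ketE i.succ ν : ℝ) : ℂ) • ((ρ * A ν).trace • A μ)) := by
    unfold chan Qn
    congr 1
    have h : ∀ μ ν : Fin 4,
        (((vecMulVec (ketE 0) (ketE 0) + ∑ i : Fin 3, l i • vecMulVec (ketE i.succ) (ketE i.succ)) μ ν : ℝ) : ℂ) • ((ρ * A ν).trace • A μ)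
        = ((ketE 0 μ * ketE 0 ν : ℝ) : ℂ) • ((ρ * A ν).trace • A μ)
          + ∑ i : Fin 3, (l i : ℂ) • (((ketE i.succ μ * ketE i.succ ν : ℝ) : ℂ) • ((ρ * A ν).trace • A μ)) := by
      intro μ ν
      simp only [Matrix.add_apply, Matrix.vecMulVec_apply, Matrix.sum_apply,
        Matrix.smul_apply, smul_eq_mul, Complex.ofReal_add, Complex.ofReal_sum,
        Complex.ofReal_mul, add_smul, Finset.sum_smul, smul_smul]
      rw [add_mul, Finset.sum_mul, add_smul, Finset.sum_smul]
      simp [mul_assoc]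
    simp only [h, Finset.sum_add_distrib, Finset.smul_sum]
    congr 1
    calc ∑ μ : Fin 4, ∑ ν : Fin 4, ∑ i : Fin 3,
          (l i : ℂ) • (((ketE i.succ μ * ketE i.succ ν : ℝ) : ℂ) • ((ρ * A ν).trace • A μ))
        = ∑ μ : Fin 4, ∑ i : Fin 3, ∑ ν : Fin 4,
          (l i : ℂ) • (((ketE i.succ μ * ketE i.succ ν : ℝ) : ℂ) • ((ρ * A ν).trace • A μ)) :=
          Finset.sum_congr rfl fun μ _ => by rw [Finset.sum_comm]
      _ = ∑ i : Fin 3, ∑ μ : Fin 4, ∑ ν : Fin 4,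
          (l i : ℂ) • (((ketE i.succ μ * ketE i.succ ν : ℝ) : ℂ) • ((ρ * A ν).trace • A μ)) :=
          by rw [Finset.sum_comm]
  rw [expand]
  simp only [rank1, key0, keyi, mul_one]
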